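/- arXiv:2305.02506 — 2 statements merged into one kernel-verified Lean document; each statement's English description precedes it below -/
import Mathlib

section
/- Density kernels are closed under joint (conditional-product) distributions: if f : Z ⇝ X admits density p_f with respect to σ-finite μ_X and g : X ⇝ Y admits jointly measurable density p_g with respect to σ-finite μ_Y, then the joint kernel h : Z ⇝ X × Y defined by h(z)(σ) = ∫_X g(x)({y | (x,y) ∈ σ}) df(z)(x) admits the density (x,y) ↦ p_f(x|z)·p_g(y|x) with respect to μ_X × μ_Y. -/
/-!
The left-hand side is the composition-product `f z ⊗ₘ g` evaluated at `σ`. By Tonelli, composing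
with a kernel of density `pg` against `μY` is the same as taking `(f z).prod μY` with density `pg`;
then `f z = μX.withDensity pf(z, ·)` contributes the factor `pf` on the first coordinate.
-/

open MeasureTheory ProbabilityTheory

namespace MeasureTheory.Measure

variable {α β : Type*} {mα : MeasurableSpace α} {mβ : MeasurableSpace β}

lemma eq_withDensity_of_forall_apply {μ ν : Measure α} {p : α → ENNReal}
    (h : ∀ s, MeasurableSet s → μ s = ∫⁻ a in s, p a ∂ν) : μ = ν.withDensity p :=
  ext fun s hs => (h s hs).trans (withDensity_apply _ hs).symm

lemma compProd_eq_withDensity_prod (μ : Measure α) [SFinite μ] {ν : Measure β} [SFinite ν]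
    {κ : Kernel α β} [IsSFiniteKernel κ] {q : α × β → ENNReal} (hq : Measurable q)
    (hκ : ∀ a s, MeasurableSet s → κ a s = ∫⁻ b in s, q (a, b) ∂ν) :
    μ ⊗ₘ κ = (μ.prod ν).withDensity q := by
  refine eq_withDensity_of_forall_apply fun s hs => ?_
  rw [compProd_apply hs, ← lintegral_indicator hs, lintegral_prod _ (hq.indicator hs).aemeasurable]
  refine lintegral_congr fun a => ?_
  rw [hκ a _ (measurable_prodMk_left hs), ← lintegral_indicator (measurable_prodMk_left hs)]
  rfl

end MeasureTheory.Measure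

theorem density_kernels_closed_under_joints_general {Z X Y : Type*}
    [MeasurableSpace Z] [MeasurableSpace X] [MeasurableSpace Y]
    (f : Kernel Z X) [IsMarkovKernel f] (g : Kernel X Y) [IsMarkovKernel g]
    (μX : Measure X) (μY : Measure Y) [SigmaFinite μY]
    (pf : Z × X → ENNReal) (hpf : Measurable pf)
    (pg : X × Y → ENNReal) (hpg : Measurable pg)
    (hf : ∀ z (σ : Set X), MeasurableSet σ → f z σ = ∫⁻ x in σ, pf (z, x) ∂μX)
    (hg : ∀ x (σ : Set Y), MeasurableSet σ → g x σ = ∫⁻ y in σ, pg (x, y) ∂μY) :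
    ∀ z (σ : Set (X × Y)), MeasurableSet σ →
      ∫⁻ x, g x {y | (x, y) ∈ σ} ∂(f z)
        = ∫⁻ q in σ, pf (z, q.1) * pg (q.1, q.2) ∂(μX.prod μY) := by
  intro z σ hσ
  have hpfz : Measurable fun x => pf (z, x) := hpf.comp measurable_prodMk_left
  have hjoint : f z ⊗ₘ g = (μX.prod μY).withDensity fun q => pf (z, q.1) * pg q := by
    rw [Measure.compProd_eq_withDensity_prod _ hpg hg,
      Measure.eq_withDensity_of_forall_apply (hf z), prod_withDensity_left hpfz]
    exact (withDensity_mul _ (hpfz.comp measurable_fst) hpg).symm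
  calc ∫⁻ x, g x {y | (x, y) ∈ σ} ∂(f z) = (f z ⊗ₘ g) σ := (Measure.compProd_apply hσ).symm
    _ = _ := by rw [hjoint, withDensity_apply _ hσ]

theorem density_kernels_closed_under_joints {Z X Y : Type*}
    [MeasurableSpace Z] [MeasurableSpace X] [MeasurableSpace Y]
    (f : Kernel Z X) [IsMarkovKernel f] (g : Kernel X Y) [IsMarkovKernel g]
    (μX : Measure X) [SigmaFinite μX] (μY : Measure Y) [SigmaFinite μY]
    (pf : Z × X → ENNReal) (hpf : Measurable pf)
    (pg : X × Y → ENNReal) (hpg : Measurable pg)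
    (hf : ∀ z (σ : Set X), MeasurableSet σ → f z σ = ∫⁻ x in σ, pf (z, x) ∂μX)
    (hg : ∀ x (σ : Set Y), MeasurableSet σ → g x σ = ∫⁻ y in σ, pg (x, y) ∂μY) :
    ∀ z (σ : Set (X × Y)), MeasurableSet σ →
      ∫⁻ x, g x {y | (x, y) ∈ σ} ∂(f z)
        = ∫⁻ q in σ, pf (z, q.1) * pg (q.1, q.2) ∂(μX.prod μY) :=
  density_kernels_closed_under_joints_general f g μX μY pf hpf pg hpg hf hg
end

section
/- Randomization lemma: for any Markov kernel f : Z ⇝ X between standard Borel spaces, there exists a measurable function k : Z × [0,1] → X such that f(z) is the pushforward of the uniform (Lebesgue) measure U on [0,1] under k(z,·), i.e., f(z)(σ) = U({u ∈ [0,1] | k(z,u) ∈ σ}) for all z ∈ Z and measurable σ ⊆ X. -/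
open MeasureTheory ProbabilityTheory Set
open scoped ENNReal

noncomputable def randQuant (μ : Measure ℝ) (u : ℝ) : ℝ :=
  if u ∈ Ioo (0:ℝ) 1 then sInf {x | ENNReal.ofReal u ≤ μ (Iic x)} else 0

lemma randQuant_le_iff (μ : Measure ℝ) [IsProbabilityMeasure μ] {u x : ℝ}
    (hu : u ∈ Ioo (0:ℝ) 1) :
    randQuant μ u ≤ x ↔ ENNReal.ofReal u ≤ μ (Iic x) := by
  set S := {x | ENNReal.ofReal u ≤ μ (Iic x)} with hS
  have hu0 : (0:ℝ≥0∞) < ENNReal.ofReal u := ENNReal.ofReal_pos.2 hu.1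
  have hu1 : ENNReal.ofReal u < 1 := by
    calc ENNReal.ofReal u < ENNReal.ofReal 1 :=
          (ENNReal.ofReal_lt_ofReal_iff one_pos).2 hu.2
      _ = 1 := ENNReal.ofReal_one
  have hSne : S.Nonempty := by
    have hT := tendsto_measure_Iic_atTop μ
    rw [measure_univ] at hT
    obtain ⟨y, hy⟩ := (hT.eventually (lt_mem_nhds hu1)).exists
    exact ⟨y, hy.le⟩
  have hbd : ∃ n : ℕ, μ (Iic (-(n:ℝ))) < ENNReal.ofReal u := by
    have hanti : Antitone (fun n : ℕ => Iic (-(n:ℝ))) := fun m n hmn =>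
      Iic_subset_Iic.2 (neg_le_neg (by exact_mod_cast hmn))
    have hempty : (⋂ n : ℕ, Iic (-(n:ℝ))) = ∅ := by
      ext y
      simp only [mem_iInter, mem_Iic, mem_empty_iff_false, iff_false, not_forall, not_le]
      obtain ⟨n, hn⟩ := exists_nat_gt (-y)
      exact ⟨n, by linarith⟩
    have hT := tendsto_measure_iInter_atTop (μ := μ)
      (fun n => nullMeasurableSet_Iic) hanti ⟨0, measure_ne_top _ _⟩
    rw [hempty, measure_empty] at hT
    exact (hT.eventually (gt_mem_nhds hu0)).exists
  obtain ⟨n₀, hn₀⟩ := hbd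
  have hSbdd : BddBelow S := by
    refine ⟨-(n₀:ℝ), fun y hy => ?_⟩
    by_contra h
    push_neg at h
    exact absurd (hy.trans (measure_mono (Iic_subset_Iic.2 h.le))) hn₀.not_ge
  have hq : randQuant μ u = sInf S := by rw [randQuant, if_pos hu]
  constructor
  · intro h
    have key : ∀ n : ℕ, ENNReal.ofReal u ≤ μ (Iic (x + 1 / (n + 1))) := by
      intro n
      have hlt : sInf S < x + 1 / (n + 1) := by
        rw [← hq]
        have : (0:ℝ) < 1 / (n + 1) := by positivity
        linarith
      obtain ⟨y, hyS, hyx⟩ := (csInf_lt_iff hSbdd hSne).mp hlt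
      exact hyS.trans (measure_mono (Iic_subset_Iic.2 hyx.le))
    have hInter : (⋂ n : ℕ, Iic (x + 1 / ((n:ℝ) + 1))) = Iic x := by
      ext y
      simp only [mem_iInter, mem_Iic]
      constructor
      · intro h'
        by_contra hxy
        push_neg at hxy
        obtain ⟨n, hn⟩ := exists_nat_one_div_lt (sub_pos.2 hxy)
        linarith [h' n, hn]
      · intro h' n
        have : (0:ℝ) < 1 / (n + 1) := by positivity
        linarith
    have hanti : Antitone (fun n : ℕ => Iic (x + 1 / ((n:ℝ) + 1))) := by
      intro m n hmn
      refine Iic_subset_Iic.2 (add_le_add_right ?_ x)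
      gcongr
    have hT := tendsto_measure_iInter_atTop (μ := μ)
      (fun n => nullMeasurableSet_Iic) hanti ⟨0, measure_ne_top _ _⟩
    rw [hInter] at hT
    exact ge_of_tendsto' hT key
  · intro h
    rw [hq]
    exact csInf_le hSbdd h

lemma randQuant_map (μ : Measure ℝ) [IsProbabilityMeasure μ]
    (hm : Measurable (randQuant μ)) :
    (volume.restrict (Set.Icc (0:ℝ) 1)).map (randQuant μ) = μ := by
  rw [Measure.restrict_congr_set Ioo_ae_eq_Icc.symm]
  haveI : IsFiniteMeasure ((volume.restrict (Ioo (0:ℝ) 1)).map (randQuant μ)) := by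
    constructor
    rw [Measure.map_apply hm MeasurableSet.univ, preimage_univ, Measure.restrict_apply_univ,
      Real.volume_Ioo]
    simp
  refine Measure.ext_of_Iic _ _ (fun x => ?_)
  rw [Measure.map_apply hm measurableSet_Iic]
  have ht1 : μ (Iic x) ≤ 1 := prob_le_one
  set t := (μ (Iic x)).toReal with htdef
  have ht0 : 0 ≤ t := ENNReal.toReal_nonneg
  have htle : t ≤ 1 := by
    rw [htdef]
    exact ENNReal.toReal_le_of_le_ofReal one_pos.le (by simpa using ht1)
  have hset : randQuant μ ⁻¹' Iic x ∩ Ioo 0 1 = Iic t ∩ Ioo 0 1 := by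
    ext u
    simp only [mem_inter_iff, mem_preimage, mem_Iic, and_congr_left_iff]
    intro hu
    rw [randQuant_le_iff μ hu,
      ENNReal.ofReal_le_iff_le_toReal (measure_ne_top _ _)]
  rw [Measure.restrict_apply' measurableSet_Ioo, hset, ← Measure.restrict_apply' measurableSet_Ioo]
  have : volume.restrict (Ioo (0:ℝ) 1) (Iic t) = ENNReal.ofReal t := by
    rw [Measure.restrict_apply' measurableSet_Ioo]
    rcases eq_or_lt_of_le htle with h1 | h1
    · have : Iic t ∩ Ioo 0 1 = Ioo (0:ℝ) 1 := by
        rw [inter_eq_right]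
        intro y hy
        exact hy.2.le.trans h1.symm.le
      rw [this, Real.volume_Ioo, h1]
      norm_num
    · have : Iic t ∩ Ioo 0 1 = Ioc (0:ℝ) t := by
        ext y
        simp only [mem_inter_iff, mem_Iic, mem_Ioo, mem_Ioc]
        constructor
        · rintro ⟨h1, h2, _⟩; exact ⟨h2, h1⟩
        · rintro ⟨h2, h3⟩; exact ⟨h3, h2, lt_of_le_of_lt h3 h1⟩
      rw [this, Real.volume_Ioc, sub_zero]
  rw [this, htdef, ENNReal.ofReal_toReal (measure_ne_top _ _)]

lemma randQuant_measurable {Z : Type*} [MeasurableSpace Z]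
    (f : Kernel Z ℝ) [IsMarkovKernel f] :
    Measurable (fun p : Z × ℝ => randQuant (f p.1) p.2) := by
  refine measurable_of_Iic (fun x => ?_)
  have hkey : (fun p : Z × ℝ => randQuant (f p.1) p.2) ⁻¹' Iic x =
      ({p : Z × ℝ | p.2 ∈ Ioo (0:ℝ) 1} ∩ {p | ENNReal.ofReal p.2 ≤ f p.1 (Iic x)}) ∪
      ({p : Z × ℝ | p.2 ∈ Ioo (0:ℝ) 1}ᶜ ∩ {p | (0:ℝ) ≤ x}) := by
    ext p
    by_cases hp : p.2 ∈ Ioo (0:ℝ) 1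
    · simp only [mem_preimage, mem_Iic, mem_union, mem_inter_iff, mem_setOf_eq, mem_compl_iff,
        hp, not_true_eq_false, false_and, or_false, true_and]
      exact randQuant_le_iff (f p.1) hp
    · simp only [mem_preimage, mem_Iic, mem_union, mem_inter_iff, mem_setOf_eq, mem_compl_iff,
        hp, not_false_eq_true, false_and, false_or, true_and]
      rw [randQuant, if_neg hp]
  rw [hkey]
  have h1 : MeasurableSet {p : Z × ℝ | p.2 ∈ Ioo (0:ℝ) 1} :=
    measurable_snd measurableSet_Ioo
  have h2 : MeasurableSet {p : Z × ℝ | ENNReal.ofReal p.2 ≤ f p.1 (Iic x)} := by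
    refine measurableSet_le ?_ ?_
    · exact ENNReal.measurable_ofReal.comp measurable_snd
    · exact (f.measurable_coe measurableSet_Iic).comp measurable_fst
  have h3 : MeasurableSet {p : Z × ℝ | (0:ℝ) ≤ x} := by
    by_cases h : (0:ℝ) ≤ x
    · simp [h]
    · simp [h]
  exact (h1.inter h2).union (h1.compl.inter h3)

theorem randomization_lemma {Z X : Type*}
    [MeasurableSpace Z] [StandardBorelSpace Z] [MeasurableSpace X] [StandardBorelSpace X]
    (f : Kernel Z X) [IsMarkovKernel f] :
    ∃ k : Z × ℝ → X, Measurable k ∧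
      ∀ z, (volume.restrict (Set.Icc (0:ℝ) 1)).map (fun u => k (z, u)) = f z := by
  rcases isEmpty_or_nonempty X with hX | hX
  · haveI : IsEmpty Z := by
      refine ⟨fun z => ?_⟩
      have h1 : (f z) univ = 1 := measure_univ
      rw [Set.univ_eq_empty_iff.mpr hX, measure_empty] at h1
      simp at h1
    exact ⟨fun p => isEmptyElim p.1, measurable_of_empty _, fun z => isEmptyElim z⟩
  · obtain ⟨e, he⟩ := exists_measurableEmbedding_real X
    obtain ⟨F, hF, hFe⟩ := he.exists_measurable_extend measurable_id (fun _ => hX)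
    -- the pushforward kernel
    set g : Kernel Z ℝ := f.map e with hg
    haveI : IsMarkovKernel g := by
      rw [hg]
      exact Kernel.IsMarkovKernel.map f he.measurable
    have hgz : ∀ z, g z = (f z).map e := fun z => Kernel.map_apply f he.measurable z
    have hq : Measurable (fun p : Z × ℝ => randQuant (g p.1) p.2) := randQuant_measurable g
    refine ⟨fun p => F (randQuant (g p.1) p.2), hF.comp hq, fun z => ?_⟩
    haveI : IsProbabilityMeasure (g z) := inferInstance
    have hqz : Measurable (randQuant (g z)) :=
      hq.comp (measurable_prodMk_left (m := inferInstance))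
    calc (volume.restrict (Set.Icc (0:ℝ) 1)).map (fun u => F (randQuant (g z) u))
        = ((volume.restrict (Set.Icc (0:ℝ) 1)).map (randQuant (g z))).map F := by
          rw [Measure.map_map hF hqz]; rfl
      _ = (g z).map F := by rw [randQuant_map (g z) hqz]
      _ = ((f z).map e).map F := by rw [hgz]
      _ = (f z).map (F ∘ e) := Measure.map_map hF he.measurable
      _ = (f z).map id := by rw [hFe]
      _ = f z := Measure.map_id
end
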